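/- Let R = k[x₁,…,x_n] with k an F-finite field of characteristic p, let 𝔞 = ⟨g₁,…,g_m⟩ be an ideal of R, let z = z₁,…,z_m be new variables, and set G = z₁g₁ + ⋯ + z_m g_m ∈ R[z]. Then for every positive rational number t = k/q with k a positive integer and q a power of p, and every ideal 𝔟 of R: 𝔞^[k] ⊆ 𝔟^[q] if and only if G^k ∈ (𝔟 R[z])^[q]. -/

import Mathlib

open scoped BigOperators

/-- The `q`-th bracket power of an ideal: the ideal generated by `q`-th powers
of elements of `a`. -/
def bracketPow {R : Type*} [CommRing R] (a : Ideal R) (q : ℕ) : Ideal R :=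
  Ideal.span ((fun x => x ^ q) '' (a : Set R))

/-- The generalized `k`-th Frobenius power of an ideal, defined via the base-`p`
digits of `k`:  `𝔞^[k] = ∏ᵢ (𝔞^[pⁱ])^(kᵢ)` where `kᵢ = k / pⁱ % p` is the `i`-th
base-`p` digit of `k` (digits with index `> k` vanish, so the product below suffices). -/
def frobPow {R : Type*} [CommRing R] (p : ℕ) (a : Ideal R) (k : ℕ) : Ideal R :=
  ∏ i ∈ Finset.range (k + 1), bracketPow a (p ^ i) ^ (k / p ^ i % p)

/-!
Let `c(F)` be the ideal generated by the coefficients of `F ∈ R[z]`. Then `F ∈ I R[z]` iff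
`c(F) ⊆ I`, and `(𝔟 R[z])^[q] = 𝔟^[q] R[z]`, so it suffices to show `c(G^k) = 𝔞^[k]`.
Write `k = k₀ + p k'` with `k₀ < p`, so that `G^k = G^{k₀} (G^{k'})^p`. Every exponent vector of
`G^{k₀}` has entries `< p`, and every exponent vector of `(G^{k'})^p` is divisible by `p`, so each
coefficient of the product is a single product of coefficients: `c(G^k) = c(G^{k₀}) c(G^{k'})^[p]`.
As `k₀ < p`, the multinomial coefficients of `G^{k₀}` are units, whence `c(G^{k₀}) = 𝔞^{k₀}`.
This is the recursion `𝔞^[k] = 𝔞^{k₀} (𝔞^[k'])^[p]` of the Frobenius power, and induction on `k`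
concludes.
-/

section BracketPow

variable {S : Type*} [CommRing S]

theorem bracketPow_one_right (I : Ideal S) : bracketPow I 1 = I := by
  simp [bracketPow]

theorem bracketPow_top (q : ℕ) : bracketPow (⊤ : Ideal S) q = ⊤ := by
  rw [Ideal.eq_top_iff_one]
  exact Ideal.subset_span ⟨1, trivial, one_pow _⟩

variable (p : ℕ) [Fact p.Prime] [CharP S p]

theorem bracketPow_span (T : Set S) (e : ℕ) :
    bracketPow (Ideal.span T) (p ^ e) = Ideal.span ((· ^ p ^ e) '' T) := by
  refine le_antisymm ?_ (Ideal.span_mono (Set.image_mono Ideal.subset_span))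
  rw [bracketPow, Ideal.span_le]
  rintro _ ⟨y, hy, rfl⟩
  rw [SetLike.mem_coe]
  induction hy using Submodule.span_induction with
  | mem x hx => exact Ideal.subset_span ⟨x, hx, rfl⟩
  | zero => simp [zero_pow (pow_ne_zero e (Fact.out : p.Prime).ne_zero)]
  | add x y _ _ hx hy => simpa only [add_pow_char_pow] using add_mem hx hy
  | smul r x _ hx => simpa only [smul_eq_mul, mul_pow] using Ideal.mul_mem_left _ _ hx

theorem bracketPow_mul (I J : Ideal S) (e : ℕ) :
    bracketPow (I * J) (p ^ e) = bracketPow I (p ^ e) * bracketPow J (p ^ e) := by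
  conv_lhs => rw [← Ideal.span_eq I, ← Ideal.span_eq J, Ideal.span_mul_span', bracketPow_span]
  rw [bracketPow, bracketPow, Ideal.span_mul_span']
  exact congrArg _ (Set.image_mul (powMonoidHom (p ^ e)))

theorem bracketPow_pow (I : Ideal S) (d e : ℕ) :
    bracketPow (I ^ d) (p ^ e) = bracketPow I (p ^ e) ^ d := by
  induction d with
  | zero => simp only [pow_zero, Ideal.one_eq_top, bracketPow_top]
  | succ d ih => rw [pow_succ, bracketPow_mul, ih, pow_succ]

theorem bracketPow_prod {ι : Type*} (s : Finset ι) (F : ι → Ideal S) (e : ℕ) :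
    bracketPow (∏ i ∈ s, F i) (p ^ e) = ∏ i ∈ s, bracketPow (F i) (p ^ e) := by
  induction s using Finset.cons_induction with
  | empty => simp only [Finset.prod_empty, Ideal.one_eq_top, bracketPow_top]
  | cons i s hi ih => rw [Finset.prod_cons, bracketPow_mul, ih, Finset.prod_cons]

theorem bracketPow_bracketPow (I : Ideal S) (e₁ e₂ : ℕ) :
    bracketPow (bracketPow I (p ^ e₁)) (p ^ e₂) = bracketPow I (p ^ (e₁ + e₂)) := by
  rw [show bracketPow I (p ^ e₁) = Ideal.span _ from rfl, bracketPow_span, Set.image_image,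
    pow_add, bracketPow]
  simp_rw [← pow_mul]

theorem bracketPow_map {R : Type*} [CommRing R] (f : R →+* S) (I : Ideal R) (e : ℕ) :
    bracketPow (I.map f) (p ^ e) = (bracketPow I (p ^ e)).map f := by
  rw [Ideal.map, bracketPow_span, bracketPow, Ideal.map_span, Set.image_image, Set.image_image]
  simp_rw [map_pow]

end BracketPow

section FrobPow

variable {S : Type*} [CommRing S] (p : ℕ)

theorem frobPow_eq_prod_range (hp : 1 < p) (a : Ideal S) {k N : ℕ} (hN : k < N) :
    frobPow p a k = ∏ i ∈ Finset.range N, bracketPow a (p ^ i) ^ (k / p ^ i % p) := by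
  refine Finset.prod_subset (Finset.range_subset_range.mpr hN) fun i _ hi ↦ ?_
  have hki : k < i := by simpa using hi
  have hk : k < p ^ i := (Nat.lt_pow_self hp).trans_le (Nat.pow_le_pow_right (by omega) hki.le)
  rw [Nat.div_eq_of_lt hk, Nat.zero_mod, pow_zero]

theorem frobPow_zero (a : Ideal S) : frobPow p a 0 = ⊤ := by
  simp [frobPow]

variable [Fact p.Prime] [CharP S p]

theorem frobPow_eq_pow_mul_bracketPow (a : Ideal S) (k : ℕ) :
    frobPow p a k = a ^ (k % p) * bracketPow (frobPow p a (k / p)) p := by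
  have hp := (Fact.out : p.Prime).one_lt
  have hdigit (i : ℕ) : bracketPow a (p ^ (i + 1)) ^ (k / p ^ (i + 1) % p) =
      bracketPow (bracketPow a (p ^ i) ^ (k / p / p ^ i % p)) (p ^ 1) := by
    rw [bracketPow_pow, bracketPow_bracketPow, Nat.div_div_eq_div_mul, ← pow_succ']
  rw [frobPow_eq_prod_range p hp a (by omega : k < k + 2), Finset.prod_range_succ',
    frobPow_eq_prod_range p hp a ((Nat.div_le_self k p).trans_lt (lt_add_one k)),
    Finset.prod_congr rfl fun i _ ↦ hdigit i, ← bracketPow_prod, pow_one, pow_zero,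
    bracketPow_one_right, Nat.div_one, mul_comm]

end FrobPow

theorem Nat.Prime.not_dvd_multinomial {α : Type*} {p : ℕ} (hp : p.Prime) {f : α →₀ ℕ}
    (hf : f.degree < p) : ¬ p ∣ f.multinomial := fun hdvd ↦
  hf.not_ge (hp.dvd_factorial.mp
    (hdvd.trans (Dvd.intro_left _ (Nat.multinomial_spec f.support f))))

namespace MvPolynomial

section ContentIdeal

variable {σ R : Type*} [CommRing R]

def contentIdeal (f : MvPolynomial σ R) : Ideal R :=
  Ideal.span (Set.range fun m ↦ f.coeff m)

theorem coeff_mem_contentIdeal (f : MvPolynomial σ R) (m : σ →₀ ℕ) :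
    f.coeff m ∈ f.contentIdeal :=
  Ideal.subset_span ⟨m, rfl⟩

@[simp]
theorem contentIdeal_one : (1 : MvPolynomial σ R).contentIdeal = ⊤ :=
  (Ideal.eq_top_iff_one _).mpr (coeff_zero_one (σ := σ) (R := R) ▸ coeff_mem_contentIdeal 1 0)

theorem contentIdeal_le_iff_mem_map_C {f : MvPolynomial σ R} {I : Ideal R} :
    f.contentIdeal ≤ I ↔ f ∈ I.map C := by
  rw [contentIdeal, Ideal.span_le, Set.range_subset_iff, mem_map_C_iff]
  rfl

theorem contentIdeal_mul_le (f g : MvPolynomial σ R) :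
    (f * g).contentIdeal ≤ f.contentIdeal * g.contentIdeal := by
  classical
  rw [contentIdeal, Ideal.span_le, Set.range_subset_iff]
  intro m
  rw [coeff_mul]
  exact sum_mem fun x _ ↦
    Ideal.mul_mem_mul (coeff_mem_contentIdeal f x.1) (coeff_mem_contentIdeal g x.2)

theorem contentIdeal_pow_le (f : MvPolynomial σ R) (d : ℕ) :
    (f ^ d).contentIdeal ≤ f.contentIdeal ^ d := by
  induction d with
  | zero => simp
  | succ d ih =>
    rw [pow_succ, pow_succ]
    exact (contentIdeal_mul_le _ _).trans (Ideal.mul_mono_left ih)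

variable (p : ℕ) [Fact p.Prime] [CharP R p]

theorem contentIdeal_pow_char_le (f : MvPolynomial σ R) :
    (f ^ p).contentIdeal ≤ bracketPow f.contentIdeal p := by
  have hmap := bracketPow_map p (C : R →+* MvPolynomial σ R) f.contentIdeal 1
  rw [pow_one] at hmap
  rw [contentIdeal_le_iff_mem_map_C, ← hmap]
  exact Ideal.subset_span ⟨f, contentIdeal_le_iff_mem_map_C.mp le_rfl, rfl⟩

theorem coeff_pow_char_smul (f : MvPolynomial σ R) (u : σ →₀ ℕ) :
    (f ^ p).coeff (p • u) = f.coeff u ^ p := by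
  rw [← map_frobenius_expand p, coeff_map, coeff_expand_smul p (Fact.out : p.Prime).ne_zero,
    frobenius_def]

theorem coeff_pow_char_of_not_dvd (f : MvPolynomial σ R) {m : σ →₀ ℕ} {i : σ}
    (h : ¬ p ∣ m i) : (f ^ p).coeff m = 0 := by
  rw [← map_frobenius_expand p, coeff_map, coeff_expand_of_not_dvd f h, map_zero]

theorem coeff_add_smul_mul_pow_char {A : MvPolynomial σ R} (hA : ∀ x ∈ A.support, ∀ i, x i < p)
    (B : MvPolynomial σ R) {w : σ →₀ ℕ} (hw : ∀ i, w i < p) (u : σ →₀ ℕ) :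
    (A * B ^ p).coeff (w + p • u) = A.coeff w * B.coeff u ^ p := by
  classical
  rw [coeff_mul, Finset.sum_eq_single_of_mem (w, p • u)
    (Finset.HasAntidiagonal.mem_antidiagonal.mpr rfl), coeff_pow_char_smul]
  rintro ⟨x, y⟩ hxy hne
  rw [Finset.HasAntidiagonal.mem_antidiagonal] at hxy
  by_contra h
  have hx := left_ne_zero_of_mul h
  have hy := right_ne_zero_of_mul h
  have hdvd (i : σ) : p ∣ y i := by
    by_contra hi
    exact hy (coeff_pow_char_of_not_dvd p B hi)
  have hxw : x = w := by
    ext i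
    obtain ⟨c, hc⟩ := hdvd i
    have hi := congrArg (fun v : σ →₀ ℕ ↦ v i % p) hxy
    simpa [hc, Nat.mod_eq_of_lt (hA x (mem_support_iff.mpr hx) i), Nat.mod_eq_of_lt (hw i)]
      using hi
  subst hxw
  exact hne (Prod.ext rfl (add_left_cancel hxy))

theorem contentIdeal_mul_pow_char {A : MvPolynomial σ R} (hA : ∀ x ∈ A.support, ∀ i, x i < p)
    (B : MvPolynomial σ R) :
    (A * B ^ p).contentIdeal = A.contentIdeal * bracketPow B.contentIdeal p := by
  refine le_antisymm
    ((contentIdeal_mul_le _ _).trans (Ideal.mul_mono_right (contentIdeal_pow_char_le p B))) ?_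
  have hspan := bracketPow_span p (Set.range fun m ↦ B.coeff m) 1
  rw [pow_one] at hspan
  rw [contentIdeal, contentIdeal, hspan, Ideal.span_mul_span', Ideal.span_le]
  rintro _ ⟨_, ⟨w, rfl⟩, _, ⟨_, ⟨u, rfl⟩, rfl⟩, rfl⟩
  change A.coeff w * B.coeff u ^ p ∈ _
  by_cases hw : ∀ i, w i < p
  · rw [← coeff_add_smul_mul_pow_char p hA B hw u]
    exact coeff_mem_contentIdeal _ _
  · rw [notMem_support_iff.mp fun h ↦ hw (hA w h), zero_mul]
    exact zero_mem _

end ContentIdeal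

section LinearForm

variable {σ R : Type*} [Fintype σ] [CommRing R] (g : σ → R)

theorem coeff_sum_X_mul_C_pow (s : σ →₀ ℕ) (n : ℕ) :
    ((∑ i, X i * C (g i)) ^ n).coeff s =
      if s.degree = n then s.multinomial * s.prod (fun i m ↦ g i ^ m) else 0 := by
  simp_rw [mul_comm (X _), ← smul_eq_C_mul]
  exact coeff_linearCombination_X_pow_of_fintype g s n

theorem lt_of_mem_support_sum_X_mul_C_pow {p d : ℕ} (hd : d < p) :
    ∀ s ∈ ((∑ i, X i * C (g i)) ^ d).support, ∀ i, s i < p := by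
  intro s hs i
  have hdeg : s.degree = d := by
    by_contra h
    simp [coeff_sum_X_mul_C_pow, h] at hs
  exact (Finsupp.le_degree i s).trans_lt (hdeg ▸ hd)

theorem contentIdeal_sum_X_mul_C_le :
    (∑ i, X i * C (g i)).contentIdeal ≤ Ideal.span (Set.range g) :=
  contentIdeal_le_iff_mem_map_C.mpr (sum_mem fun i _ ↦
    Ideal.mul_mem_left _ _ (Ideal.mem_map_of_mem C (Ideal.subset_span ⟨i, rfl⟩)))

variable (p : ℕ) [Fact p.Prime] [CharP R p]

theorem contentIdeal_sum_X_mul_C_pow_of_lt {d : ℕ} (hd : d < p) :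
    ((∑ i, X i * C (g i)) ^ d).contentIdeal = Ideal.span (Set.range g) ^ d := by
  refine le_antisymm ((contentIdeal_pow_le _ d).trans
    (Ideal.pow_right_mono (contentIdeal_sum_X_mul_C_le g) d)) ?_
  rw [Ideal.span, Submodule.span_pow, Submodule.span_le]
  intro x hx
  obtain ⟨f, hf, rfl⟩ := Set.mem_pow_iff_prod.mp hx
  choose φ hφ using hf
  let s : σ →₀ ℕ := ∑ j, Finsupp.single (φ j) 1
  have hs : s.degree = d := by simp [s]
  have hprod : s.prod (fun i m ↦ g i ^ m) = ∏ j, f j := by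
    rw [← Finsupp.prod_finsetSum_index (fun _ ↦ pow_zero _) (fun _ _ _ ↦ pow_add _ _ _)]
    simp [hφ]
  have hunit : IsUnit (s.multinomial : R) :=
    (CharP.isUnit_natCast_iff (Fact.out : p.Prime)).mpr
      ((Fact.out : p.Prime).not_dvd_multinomial (hs ▸ hd))
  have hcoeff := coeff_sum_X_mul_C_pow g s d
  rw [if_pos hs, hprod] at hcoeff
  rw [SetLike.mem_coe, ← Ideal.unit_mul_mem_iff_mem _ hunit, ← hcoeff]
  exact coeff_mem_contentIdeal _ _

theorem contentIdeal_sum_X_mul_C_pow (k : ℕ) :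
    ((∑ i, X i * C (g i)) ^ k).contentIdeal = frobPow p (Ideal.span (Set.range g)) k := by
  set G := ∑ i, X i * C (g i)
  induction k using Nat.strong_induction_on with
  | _ k ih =>
    rcases Nat.eq_zero_or_pos k with rfl | hk
    · rw [pow_zero, frobPow_zero, contentIdeal_one]
    · have hp : p.Prime := Fact.out
      have hsplit : G ^ k = G ^ (k % p) * (G ^ (k / p)) ^ p := by
        rw [← pow_mul, ← pow_add, Nat.mod_add_div']
      rw [hsplit, contentIdeal_mul_pow_char p
        (lt_of_mem_support_sum_X_mul_C_pow g (Nat.mod_lt k hp.pos)),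
        contentIdeal_sum_X_mul_C_pow_of_lt g p (Nat.mod_lt k hp.pos),
        ih _ (Nat.div_lt_self hk hp.one_lt)]
      exact (frobPow_eq_pow_mul_bracketPow p _ k).symm

end LinearForm

end MvPolynomial

theorem stmt_19_general {K : Type*} [Field K] (p : ℕ) [Fact p.Prime] [CharP K p]
    {n m : ℕ} (g : Fin m → MvPolynomial (Fin n) K)
    (a : Ideal (MvPolynomial (Fin n) K)) (ha : a = Ideal.span (Set.range g))
    (G : MvPolynomial (Fin m) (MvPolynomial (Fin n) K))
    (hG : G = ∑ i, MvPolynomial.X i * MvPolynomial.C (g i))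
    (k e : ℕ) (b : Ideal (MvPolynomial (Fin n) K)) :
    frobPow p a k ≤ bracketPow b (p ^ e) ↔
      G ^ k ∈ bracketPow (Ideal.map (MvPolynomial.C :
        MvPolynomial (Fin n) K →+* MvPolynomial (Fin m) (MvPolynomial (Fin n) K)) b)
        (p ^ e) := by
  rw [ha, hG, bracketPow_map, ← MvPolynomial.contentIdeal_le_iff_mem_map_C,
    MvPolynomial.contentIdeal_sum_X_mul_C_pow]

/-- For `R = K[x₁,…,xₙ]` over an F-finite field `K` of characteristic
`p`, `𝔞 = ⟨g₁,…,g_m⟩`, and the generic linear combination `G = z₁g₁ + ⋯ + z_m g_m` in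
`R[z] = R[z₁,…,z_m]`: for every positive `t = k/q` (with `k > 0` and `q = pᵉ`) and every
ideal `𝔟` of `R`, `𝔞^[k] ⊆ 𝔟^[q]` if and only if `G^k ∈ (𝔟 R[z])^[q]`. -/
theorem stmt_19 {K : Type*} [Field K] (p : ℕ) [Fact p.Prime] [CharP K p]
    (hFfin : (frobenius K p).Finite)
    {n m : ℕ} (g : Fin m → MvPolynomial (Fin n) K)
    (a : Ideal (MvPolynomial (Fin n) K)) (ha : a = Ideal.span (Set.range g))
    (G : MvPolynomial (Fin m) (MvPolynomial (Fin n) K))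
    (hG : G = ∑ i, MvPolynomial.X i * MvPolynomial.C (g i))
    (k e : ℕ) (hk : 0 < k) (b : Ideal (MvPolynomial (Fin n) K)) :
    frobPow p a k ≤ bracketPow b (p ^ e) ↔
      G ^ k ∈ bracketPow (Ideal.map (MvPolynomial.C :
        MvPolynomial (Fin n) K →+* MvPolynomial (Fin m) (MvPolynomial (Fin n) K)) b)
        (p ^ e) :=
  stmt_19_general p g a ha G hG k e b
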